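/- arXiv:2310.20651 — 3 statements merged into one kernel-verified Lean document; each statement's English description precedes it below -/
import Mathlib

section
/- Let τ ∈ [0, (q−1)/q] and define f : F_q → ℝ by f(0) = √(1−τ) and f(α) = √(τ/(q−1)) for α ≠ 0. Then the Fourier transform f̂(x) = (1/√q) ∑_y χ_x(y) f(y) satisfies f̂(0) = √(1−τ^⊥) and f̂(α) = √(τ^⊥/(q−1)) for all α ≠ 0, where τ^⊥ = (√((q−1)(1−τ)) − √τ)² / q. -/
/-!
Write `f = (a - b) δ₀ + b` with `a = √(1 - τ)`, `b = √(τ/(q - 1))`. The transform of `δ₀` is the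
constant `q^{-1/2}`, and that of the constant `1` is `√q δ₀`, because `y ↦ χ_α(y)` is a nontrivial
additive character for `α ≠ 0` (the trace form is nondegenerate). Hence `f̂(0) = (a + (q - 1) b)/√q`
and `f̂(α) = (a - b)/√q`. On the other side `τ^⊥ = (q - 1)(a - b)²/q`, and
`(a + (q - 1) b)² + (q - 1)(a - b)² = q (a² + (q - 1) b²) = q`.
-/

open scoped BigOperators
open Finset

/-- The additive character `χ_y(x) = exp(2πi·Tr(x·y)/p)` of a finite field `F` of
characteristic `p`, where `Tr` is the (absolute) trace from `F` down to `F_p = ZMod p`. -/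
noncomputable def chi1 (F : Type) [Field F] [Fintype F]
    [Algebra (ZMod (ringChar F)) F] (y x : F) : ℂ :=
  Complex.exp (2 * Real.pi * Complex.I *
    ((Algebra.trace (ZMod (ringChar F)) F (x * y)).val : ℂ) / (ringChar F : ℂ))

/-- The Fourier transform on `F_q`: `f̂(x) = q^{-1/2} ∑_y χ_x(y) f(y)`. -/
noncomputable def FT1 (F : Type) [Field F] [Fintype F]
    [Algebra (ZMod (ringChar F)) F] (f : F → ℂ) : F → ℂ :=
  fun x => (Real.sqrt (Fintype.card F : ℝ) : ℂ)⁻¹ * ∑ y : F, chi1 F x y * f y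

/-- `τ^⊥ = (√((q−1)(1−τ)) − √τ)² / q`. -/
noncomputable def tauPerp (q τ : ℝ) : ℝ :=
  (Real.sqrt ((q - 1) * (1 - τ)) - Real.sqrt τ) ^ 2 / q

instance FiniteField.neZero_ringChar (F : Type*) [Field F] [Finite F] : NeZero (ringChar F) :=
  ⟨(CharP.char_is_prime F _).ne_zero⟩

section traceChar

variable (F : Type*) [Field F] [Finite F] [Algebra (ZMod (ringChar F)) F]

noncomputable def traceChar : AddChar F ℂ :=
  ZMod.stdAddChar.compAddMonoidHom (Algebra.trace (ZMod (ringChar F)) F).toAddMonoidHom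

lemma isPrimitive_traceChar : (traceChar F).IsPrimitive := by
  refine AddChar.IsPrimitive.of_ne_one fun h => ?_
  obtain ⟨b, hb⟩ := FiniteField.trace_to_zmod_nondegenerate F (one_ne_zero (α := F))
  refine hb (ZMod.injective_stdAddChar ?_)
  simpa [traceChar] using DFunLike.congr_fun h (1 * b)

end traceChar

section chi1

variable (F : Type) [Field F] [Fintype F] [Algebra (ZMod (ringChar F)) F]

lemma chi1_eq_traceChar (x y : F) : chi1 F x y = traceChar F (y * x) := by
  rw [chi1, traceChar, AddChar.compAddMonoidHom_apply, ZMod.stdAddChar_apply,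
    ZMod.toCircle_apply]
  rfl

lemma sum_chi1 [DecidableEq F] (x : F) :
    ∑ y, chi1 F x y = if x = 0 then (Fintype.card F : ℂ) else 0 := by
  simp_rw [chi1_eq_traceChar]
  exact_mod_cast AddChar.sum_mulShift x (isPrimitive_traceChar F)

variable {F} {f : F → ℂ} {b : ℂ}

lemma chi1_apply_zero (x : F) : chi1 F x 0 = 1 := by simp [chi1]

lemma sum_chi1_mul_eq (hf : ∀ y ≠ 0, f y = b) (x : F) :
    ∑ y, chi1 F x y * f y = f 0 - b + b * ∑ y, chi1 F x y := by
  classical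
  rw [← add_sum_erase _ _ (mem_univ 0),
    sum_congr rfl fun y hy => by rw [hf y (ne_of_mem_erase hy)], ← sum_mul,
    sum_erase_eq_sub (mem_univ 0), chi1_apply_zero]
  ring

lemma FT1_zero_eq (hf : ∀ y ≠ 0, f y = b) :
    FT1 F f 0 = (f 0 + (Fintype.card F - 1) * b) / Real.sqrt (Fintype.card F) := by
  classical
  rw [FT1, sum_chi1_mul_eq hf, sum_chi1, if_pos rfl]
  ring

lemma FT1_eq_of_ne_zero (hf : ∀ y ≠ 0, f y = b) {x : F} (hx : x ≠ 0) :
    FT1 F f x = (f 0 - b) / Real.sqrt (Fintype.card F) := by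
  classical
  rw [FT1, sum_chi1_mul_eq hf, sum_chi1, if_neg hx]
  ring

end chi1

section tauPerp

variable {q : ℝ} (hq : 1 < q) {τ : ℝ}
include hq

lemma tauPerp_eq :
    tauPerp q τ = (q - 1) * (Real.sqrt (1 - τ) - Real.sqrt (τ / (q - 1))) ^ 2 / q := by
  have hmul : Real.sqrt ((q - 1) * (1 - τ)) = Real.sqrt (q - 1) * Real.sqrt (1 - τ) :=
    Real.sqrt_mul (by linarith) _
  have hτ : Real.sqrt τ = Real.sqrt (q - 1) * Real.sqrt (τ / (q - 1)) := by
    rw [← Real.sqrt_mul (by linarith), mul_div_cancel₀ _ (by linarith)]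
  rw [tauPerp, hmul, hτ, ← mul_sub, mul_pow, Real.sq_sqrt (by linarith)]

lemma sqrt_one_sub_tauPerp (hτ0 : 0 ≤ τ) (hτ1 : τ ≤ 1) :
    Real.sqrt (1 - tauPerp q τ) =
      (Real.sqrt (1 - τ) + (q - 1) * Real.sqrt (τ / (q - 1))) / Real.sqrt q := by
  have ha := Real.sq_sqrt (sub_nonneg.mpr hτ1)
  have hb : (q - 1) * Real.sqrt (τ / (q - 1)) ^ 2 = τ := by
    rw [Real.sq_sqrt (div_nonneg hτ0 (by linarith)), mul_div_cancel₀ _ (by linarith)]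
  have hsq : 1 - tauPerp q τ =
      (Real.sqrt (1 - τ) + (q - 1) * Real.sqrt (τ / (q - 1))) ^ 2 / q := by
    rw [tauPerp_eq hq]
    field_simp
    linear_combination (-q) * ha - q * hb
  rw [hsq, Real.sqrt_div' _ (by linarith), Real.sqrt_sq (by positivity)]

lemma sqrt_tauPerp_div (hτ1 : τ ≤ (q - 1) / q) :
    Real.sqrt (tauPerp q τ / (q - 1)) =
      (Real.sqrt (1 - τ) - Real.sqrt (τ / (q - 1))) / Real.sqrt q := by
  have hle : Real.sqrt (τ / (q - 1)) ≤ Real.sqrt (1 - τ) := by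
    apply Real.sqrt_le_sqrt
    rw [le_div_iff₀ (by linarith : (0 : ℝ) < q)] at hτ1
    rw [div_le_iff₀ (by linarith)]
    linarith
  rw [tauPerp_eq hq, mul_div_assoc, mul_div_cancel_left₀ _ (by linarith),
    Real.sqrt_div' _ (by linarith), Real.sqrt_sq (sub_nonneg.mpr hle)]

end tauPerp

/-- The Fourier transform of the "Bernoulli amplitude" function
`f(0) = √(1−τ)`, `f(α) = √(τ/(q−1))` for `α ≠ 0`, is of the same form with `τ`
replaced by `τ^⊥`. -/
theorem FT_bernoulli (F : Type) [Field F] [Fintype F]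
    [Algebra (ZMod (ringChar F)) F] (τ : ℝ)
    (hτ0 : 0 ≤ τ) (hτ1 : τ ≤ ((Fintype.card F : ℝ) - 1) / (Fintype.card F : ℝ))
    (f : F → ℂ)
    (hf0 : f 0 = (Real.sqrt (1 - τ) : ℂ))
    (hfα : ∀ α : F, α ≠ 0 → f α = (Real.sqrt (τ / ((Fintype.card F : ℝ) - 1)) : ℂ)) :
    FT1 F f 0 = (Real.sqrt (1 - tauPerp (Fintype.card F) τ) : ℂ) ∧
    ∀ α : F, α ≠ 0 →
      FT1 F f α =
        (Real.sqrt (tauPerp (Fintype.card F) τ / ((Fintype.card F : ℝ) - 1)) : ℂ) := by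
  have hq : 1 < (Fintype.card F : ℝ) := by exact_mod_cast Fintype.one_lt_card
  have hτ1' : τ ≤ 1 := hτ1.trans (div_le_one_of_le₀ (by linarith) (by linarith))
  refine ⟨?_, fun α hα => ?_⟩
  · rw [FT1_zero_eq hfα, sqrt_one_sub_tauPerp hq hτ0 hτ1', hf0]
    push_cast
    ring
  · rw [FT1_eq_of_ne_zero hfα hα, sqrt_tauPerp_div hq hτ1, hf0]
    push_cast
    ring
end

section
/- The map τ ↦ τ^⊥ := (√((q−1)(1−τ)) − √τ)²/q is an involution on the interval [0, (q−1)/q], i.e., (τ^⊥)^⊥ = τ for every τ ∈ [0,(q−1)/q], and moreover τ^⊥ ∈ [0,(q−1)/q]. -/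
/-- The map `τ ↦ τ^⊥` is an involution of the interval `[0, (q−1)/q]`. -/
theorem tauPerp_involutive (q τ : ℝ) (hq : 2 ≤ q)
    (h0 : 0 ≤ τ) (h1 : τ ≤ (q - 1) / q) :
    tauPerp q (tauPerp q τ) = τ ∧ 0 ≤ tauPerp q τ ∧ tauPerp q τ ≤ (q - 1) / q := by
  have hq0 : (0:ℝ) < q := by linarith
  have hqτ : q * τ ≤ q - 1 := by
    rw [le_div_iff₀ hq0] at h1; linarith
  have hτ1 : τ ≤ 1 := by nlinarith
  set a := Real.sqrt ((q - 1) * (1 - τ)) with ha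
  set b := Real.sqrt τ with hb
  have ha0 : 0 ≤ a := Real.sqrt_nonneg _
  have hb0 : 0 ≤ b := Real.sqrt_nonneg _
  have ha2 : a ^ 2 = (q - 1) * (1 - τ) := Real.sq_sqrt (by nlinarith)
  have hb2 : b ^ 2 = τ := Real.sq_sqrt h0
  have hba : b ≤ a := by
    rw [ha, hb]
    exact Real.sqrt_le_sqrt (by nlinarith)
  have hab : 0 ≤ a * b := mul_nonneg ha0 hb0
  have hsq : (a - b) ^ 2 ≤ q - 1 := by nlinarith
  have hperp : tauPerp q τ = (a - b) ^ 2 / q := rfl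
  have hperp0 : 0 ≤ tauPerp q τ := by
    rw [hperp]; positivity
  have hperp1 : tauPerp q τ ≤ (q - 1) / q := by
    rw [hperp]
    exact div_le_div_of_nonneg_right hsq hq0.le
  refine ⟨?_, hperp0, hperp1⟩
  -- compute the two square roots appearing in tauPerp q (tauPerp q τ)
  have hsq0 : (0:ℝ) ≤ Real.sqrt q := Real.sqrt_nonneg q
  have hsqq : Real.sqrt q ^ 2 = q := Real.sq_sqrt hq0.le
  have hsqpos : 0 < Real.sqrt q := Real.sqrt_pos.mpr hq0
  have key1 : Real.sqrt ((q - 1) * (1 - tauPerp q τ)) = (a + (q - 1) * b) / Real.sqrt q := by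
    have : (q - 1) * (1 - tauPerp q τ) = ((a + (q - 1) * b) / Real.sqrt q) ^ 2 := by
      rw [hperp, div_pow, hsqq]
      field_simp
      linear_combination (-q : ℝ) * ha2 - q * (q - 1) * hb2
    rw [this, Real.sqrt_sq (div_nonneg (by nlinarith) hsq0)]
  have key2 : Real.sqrt (tauPerp q τ) = (a - b) / Real.sqrt q := by
    have : tauPerp q τ = ((a - b) / Real.sqrt q) ^ 2 := by
      rw [hperp, div_pow, hsqq]
    rw [this, Real.sqrt_sq (div_nonneg (by linarith) hsq0)]
  show (Real.sqrt ((q - 1) * (1 - tauPerp q τ)) - Real.sqrt (tauPerp q τ)) ^ 2 / q = τ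
  rw [key1, key2, show (a + (q - 1) * b) / Real.sqrt q - (a - b) / Real.sqrt q
      = q * b / Real.sqrt q by ring, div_pow, hsqq]
  rw [← hb2]
  field_simp
end

section
/- Let f : F_q^n → ℂ with ‖f‖₂ = 1 and suppose f̂(x) ≠ 0 for all x ∈ F_q^n. For b ∈ F_q^n define ψ_b ∈ ℂ^{F_q^n} by ψ_b(x) = f(x − b), and define the reciprocal vectors ψ_b^⊥ = Z^{-1/2} ∑_{x ∈ F_q^n} (conj(f̂(−x)))^{-1} χ_x(−b) ĝ_x where ĝ_x is the Fourier basis vector ĝ_x = q^{-n/2} ∑_y χ_x(y) e_y and Z = ∑_x |f̂(x)|^{-2}. Then ⟨ψ_a^⊥, ψ_b⟩ = (q^n/√Z)·δ_{a,b} for all a, b ∈ F_q^n. In particular the states {ψ_b} are linearly independent. -/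
open scoped BigOperators
open Finset

/-- The character of `F_q^n`, extended multiplicatively: `χ_y(x) = ∏ i, χ_{y i}(x i)`. -/
noncomputable def chi (F : Type) [Field F] [Fintype F]
    [Algebra (ZMod (ringChar F)) F] (n : ℕ) (y x : Fin n → F) : ℂ :=
  ∏ i, chi1 F (y i) (x i)

/-- The Fourier transform on `F_q^n`: `f̂(x) = q^{-n/2} ∑_y χ_x(y) f(y)`. -/
noncomputable def FT (F : Type) [Field F] [Fintype F]
    [Algebra (ZMod (ringChar F)) F] (n : ℕ) (f : (Fin n → F) → ℂ) :
    (Fin n → F) → ℂ :=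
  fun x => (Real.sqrt ((Fintype.card F : ℝ) ^ n) : ℂ)⁻¹ * ∑ y : Fin n → F, chi F n x y * f y

/-! ### Auxiliary lemmas -/

noncomputable def zetRS (p : ℕ) : ℂ := Complex.exp (2 * Real.pi * Complex.I / p)

lemma zetRS_pow (p : ℕ) [NeZero p] : zetRS p ^ p = 1 := by
  rw [zetRS, ← Complex.exp_nat_mul, mul_div_cancel₀, Complex.exp_two_pi_mul_I]
  exact_mod_cast (Nat.cast_ne_zero (R := ℂ)).2 (NeZero.ne p)

section Aux

variable {F : Type} [Field F] [Fintype F] [DecidableEq F]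
  [Algebra (ZMod (ringChar F)) F] [NeZero (ringChar F)]

/-- `chi1` bundled as an additive character. -/
noncomputable def chiARS (F : Type) [Field F] [Fintype F]
    [Algebra (ZMod (ringChar F)) F] [NeZero (ringChar F)] (y : F) : AddChar F ℂ :=
  (AddChar.zmodChar (ringChar F) (zetRS_pow (ringChar F))).compAddMonoidHom
    ((Algebra.trace (ZMod (ringChar F)) F).toAddMonoidHom.comp (AddMonoidHom.mulRight y))

lemma chi1_eq_chiARS (y x : F) : chi1 F y x = chiARS F y x := by
  rw [chiARS, AddChar.compAddMonoidHom_apply, AddChar.zmodChar_apply, zetRS,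
    ← Complex.exp_nat_mul, chi1]
  congr 1
  simp only [AddMonoidHom.coe_comp, LinearMap.toAddMonoidHom_coe, Function.comp_apply,
    AddMonoidHom.coe_mulRight]
  ring

lemma chiARS_ne_zero [Fact (ringChar F).Prime] {y : F} (hy : y ≠ 0) : chiARS F y ≠ 0 := by
  obtain ⟨b, hb⟩ := FiniteField.trace_to_zmod_nondegenerate F hy
  rw [AddChar.ne_zero_iff]
  refine ⟨b, fun h => hb ?_⟩
  have hprim := AddChar.zmodChar_primitive_of_primitive_root (ringChar F)
    (Complex.isPrimitiveRoot_exp (ringChar F) (NeZero.ne _))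
  have h1 : AddChar.zmodChar (ringChar F) (zetRS_pow (ringChar F))
      (Algebra.trace (ZMod (ringChar F)) F (b * y)) = 1 := h
  have := (hprim.zmod_char_eq_one_iff (ringChar F) _).mp h1
  rwa [mul_comm] at this

lemma chi1_zero_left (x : F) : chi1 F 0 x = 1 := by
  simp [chi1]

lemma chi1_add (y x₁ x₂ : F) : chi1 F y (x₁ + x₂) = chi1 F y x₁ * chi1 F y x₂ := by
  simp only [chi1_eq_chiARS]
  exact AddChar.map_add_eq_mul _ _ _

lemma chi1_neg_right (y x : F) : chi1 F y (-x) = (chi1 F y x)⁻¹ := by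
  simp only [chi1_eq_chiARS]
  exact AddChar.map_neg_eq_inv _ _

lemma chi1_conj (y x : F) : (starRingEnd ℂ) (chi1 F y x) = chi1 F y (-x) := by
  rw [chi1_neg_right, chi1, ← Complex.exp_conj, ← Complex.exp_neg]
  congr 1
  simp only [map_div₀, map_mul, Complex.conj_I, Complex.conj_ofReal, map_ofNat,
    map_natCast]
  ring

lemma chi1_swap (y x : F) : chi1 F y x = chi1 F x y := by
  rw [chi1, chi1, mul_comm x y]

lemma chi1_neg_swap (y x : F) : chi1 F y (-x) = chi1 F (-y) x := by
  rw [chi1, chi1, neg_mul, mul_neg]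

lemma chi1_sum [Fact (ringChar F).Prime] (y : F) :
    ∑ x : F, chi1 F y x = if y = 0 then (Fintype.card F : ℂ) else 0 := by
  simp only [chi1_eq_chiARS]
  split_ifs with h
  · subst h
    have h1 : ∀ x : F, chiARS F (0 : F) x = 1 := by
      intro x; rw [← chi1_eq_chiARS]; exact chi1_zero_left x
    simp [h1]
  · exact AddChar.sum_eq_zero_iff_ne_zero.mpr (chiARS_ne_zero h)

variable {n : ℕ}

lemma chi_swap (y x : Fin n → F) : chi F n y x = chi F n x y := by
  unfold chi
  exact Finset.prod_congr rfl fun i _ => chi1_swap _ _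

lemma chi_neg_swap (y x : Fin n → F) : chi F n y (-x) = chi F n (-y) x := by
  unfold chi
  exact Finset.prod_congr rfl fun i _ => chi1_neg_swap _ _

lemma chi_add_right (y a b : Fin n → F) :
    chi F n y (a + b) = chi F n y a * chi F n y b := by
  unfold chi
  rw [← Finset.prod_mul_distrib]
  exact Finset.prod_congr rfl fun i _ => chi1_add _ _ _

lemma chi_conj (y x : Fin n → F) :
    (starRingEnd ℂ) (chi F n y x) = chi F n y (-x) := by
  unfold chi
  rw [map_prod]
  exact Finset.prod_congr rfl fun i _ => chi1_conj _ _

lemma chi_sum [Fact (ringChar F).Prime] (y : Fin n → F) :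
    ∑ x : Fin n → F, chi F n y x = if y = 0 then (Fintype.card F : ℂ) ^ n else 0 := by
  have h1 : ∑ x : Fin n → F, chi F n y x = ∏ i, ∑ a : F, chi1 F (y i) a := by
    rw [Finset.prod_univ_sum, Fintype.piFinset_univ]
    rfl
  rw [h1]
  by_cases h : y = 0
  · subst h
    simp [chi1_sum]
  · rw [if_neg h]
    obtain ⟨i, hi⟩ : ∃ i, y i ≠ 0 := by
      by_contra hc
      push_neg at hc
      exact h (funext hc)
    exact Finset.prod_eq_zero (mem_univ i) (by rw [chi1_sum, if_neg hi])

end Aux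

set_option maxHeartbeats 2000000 in
/-- Reciprocal states for unambiguous discrimination of the shifted states
`ψ_b(x) = f(x − b)`: with `ψ_b^⊥ = Z^{-1/2} ∑_x (conj f̂(−x))⁻¹ χ_x(−b) ĝ_x` one has
`⟨ψ_a^⊥, ψ_b⟩ = (q^n/√Z)·δ_{a,b}`; in particular the `ψ_b` are linearly independent. -/
theorem reciprocal_states (F : Type) [Field F] [Fintype F] [DecidableEq F]
    [Algebra (ZMod (ringChar F)) F] (n : ℕ)
    (f : (Fin n → F) → ℂ) (hf : ∑ x : Fin n → F, ‖f x‖ ^ 2 = 1)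
    (hfhat : ∀ x : Fin n → F, FT F n f x ≠ 0)
    (ψ : (Fin n → F) → (Fin n → F) → ℂ) (hψ : ∀ b x, ψ b x = f (x - b))
    (Z : ℝ) (hZ : Z = ∑ x : Fin n → F, (‖FT F n f x‖ ^ 2)⁻¹)
    (ψperp : (Fin n → F) → (Fin n → F) → ℂ)
    (hψperp : ∀ b y, ψperp b y = (Real.sqrt Z : ℂ)⁻¹ *
      ∑ x : Fin n → F, ((starRingEnd ℂ) (FT F n f (-x)))⁻¹ * chi F n x (-b) *
        ((Real.sqrt ((Fintype.card F : ℝ) ^ n) : ℂ)⁻¹ * chi F n x y)) :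
    (∀ a b : Fin n → F,
      ∑ y : Fin n → F, (starRingEnd ℂ) (ψperp a y) * ψ b y =
        ((Fintype.card F : ℂ) ^ n / (Real.sqrt Z : ℂ)) * (if a = b then 1 else 0)) ∧
    LinearIndependent ℂ ψ := by
  haveI hp : Fact (ringChar F).Prime := ⟨CharP.char_is_prime F _⟩
  haveI : NeZero (ringChar F) := ⟨hp.out.ne_zero⟩
  set q : ℂ := (Fintype.card F : ℂ) with hqdef
  set s : ℂ := ((Real.sqrt ((Fintype.card F : ℝ) ^ n) : ℝ) : ℂ) with hsdef
  have hcard : (0 : ℝ) < (Fintype.card F : ℝ) ^ n := by positivity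
  have hs_ne : s ≠ 0 :=
    Complex.ofReal_ne_zero.mpr (Real.sqrt_pos.mpr hcard).ne'
  have hss : s * s = q ^ n := by
    rw [hsdef, ← Complex.ofReal_mul, Real.mul_self_sqrt hcard.le]
    push_cast
    rfl
  have hZpos : 0 < Z := by
    rw [hZ]
    refine Finset.sum_pos (fun x _ => ?_) univ_nonempty
    exact inv_pos.mpr (pow_pos (norm_pos_iff.mpr (hfhat x)) 2)
  have hsZ : ((Real.sqrt Z : ℝ) : ℂ) ≠ 0 :=
    Complex.ofReal_ne_zero.mpr (Real.sqrt_pos.mpr hZpos).ne'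
  have hq_ne : q ≠ 0 := Nat.cast_ne_zero.mpr Fintype.card_ne_zero
  set w : ℂ := ((Real.sqrt Z : ℝ) : ℂ)⁻¹ with hwdef
  have key : ∀ a b : Fin n → F,
      ∑ y : Fin n → F, (starRingEnd ℂ) (ψperp a y) * ψ b y =
        (q ^ n / ((Real.sqrt Z : ℝ) : ℂ)) * (if a = b then 1 else 0) := by
    intro a b
    have hcw : (starRingEnd ℂ) w = w := by
      rw [hwdef, map_inv₀, Complex.conj_ofReal]
    have hcs : (starRingEnd ℂ) s = s := by
      rw [hsdef, Complex.conj_ofReal]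
    have conj_term : ∀ y, (starRingEnd ℂ) (ψperp a y) =
        w * ∑ x : Fin n → F,
          (FT F n f (-x))⁻¹ * chi F n x a * (s⁻¹ * chi F n x (-y)) := by
      intro y
      simp only [hψperp, map_mul, map_sum, map_inv₀, hcw, hcs, chi_conj,
        neg_neg, Complex.conj_conj]
    have shift : ∀ x : Fin n → F,
        ∑ y : Fin n → F, chi F n x (-y) * f (y - b) =
          chi F n x (-b) * (s * FT F n f (-x)) := by
      intro x
      rw [← Equiv.sum_comp (Equiv.addRight b) (fun y => chi F n x (-y) * f (y - b))]
      simp only [Equiv.coe_addRight, add_sub_cancel_right]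
      have h1 : ∀ z : Fin n → F, chi F n x (-(z + b)) * f z =
          chi F n x (-b) * (chi F n (-x) z * f z) := by
        intro z
        rw [neg_add, chi_add_right, chi_neg_swap]
        ring
      simp only [h1]
      rw [← Finset.mul_sum]
      congr 1
      rw [FT, ← hsdef, mul_inv_cancel_left₀ hs_ne]
    have expand : ∀ y, (starRingEnd ℂ) (ψperp a y) * ψ b y =
        ∑ x : Fin n → F, (w * ((FT F n f (-x))⁻¹ * chi F n x a * s⁻¹)) *
          (chi F n x (-y) * f (y - b)) := by
      intro y
      rw [conj_term y, hψ, mul_comm w, Finset.sum_mul, Finset.sum_mul]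
      exact Finset.sum_congr rfl fun x _ => by ring
    calc ∑ y : Fin n → F, (starRingEnd ℂ) (ψperp a y) * ψ b y
        = ∑ y : Fin n → F, ∑ x : Fin n → F,
            (w * ((FT F n f (-x))⁻¹ * chi F n x a * s⁻¹)) *
              (chi F n x (-y) * f (y - b)) := by
          exact Finset.sum_congr rfl fun y _ => expand y
      _ = ∑ x : Fin n → F, (w * ((FT F n f (-x))⁻¹ * chi F n x a * s⁻¹)) *
            (chi F n x (-b) * (s * FT F n f (-x))) := by
          rw [Finset.sum_comm]
          exact Finset.sum_congr rfl fun x _ => by rw [← Finset.mul_sum, shift x]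
      _ = ∑ x : Fin n → F, w * chi F n x (a - b) := by
          refine Finset.sum_congr rfl fun x _ => ?_
          have hx1 : FT F n f (-x) ≠ 0 := hfhat _
          have h2 : chi F n x a * chi F n x (-b) = chi F n x (a - b) := by
            rw [← chi_add_right, sub_eq_add_neg]
          rw [← h2]
          field_simp
      _ = w * ∑ x : Fin n → F, chi F n (a - b) x := by
          rw [← Finset.mul_sum]
          congr 1
          exact Finset.sum_congr rfl fun x _ => chi_swap _ _
      _ = (q ^ n / ((Real.sqrt Z : ℝ) : ℂ)) * (if a = b then 1 else 0) := by
          rw [chi_sum]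
          by_cases hab : a = b
          · rw [if_pos (sub_eq_zero.mpr hab), if_pos hab, hwdef, div_eq_mul_inv]
            ring
          · rw [if_neg (fun h => hab (sub_eq_zero.mp h)), if_neg hab]
            ring
  refine ⟨key, ?_⟩
  rw [Fintype.linearIndependent_iff]
  intro g hg a
  set C : ℂ := q ^ n / ((Real.sqrt Z : ℝ) : ℂ) with hCdef
  have hC : C ≠ 0 := div_ne_zero (pow_ne_zero _ hq_ne) hsZ
  have h0 : ∀ y, ∑ b : Fin n → F, g b * ψ b y = 0 := by
    intro y
    have := congrFun hg y
    simpa [Finset.sum_apply, Pi.smul_apply, smul_eq_mul] using this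
  have hga : g a * C = 0 := by
    calc g a * C = ∑ b : Fin n → F, g b * (C * (if a = b then 1 else 0)) := by
          simp [mul_ite, Finset.sum_ite_eq, mul_comm]
      _ = ∑ b : Fin n → F, g b * ∑ y : Fin n → F, (starRingEnd ℂ) (ψperp a y) * ψ b y := by
          exact Finset.sum_congr rfl fun b _ => by rw [key a b]
      _ = ∑ y : Fin n → F, (starRingEnd ℂ) (ψperp a y) *
            ∑ b : Fin n → F, g b * ψ b y := by
          simp only [Finset.mul_sum]
          rw [Finset.sum_comm]
          exact Finset.sum_congr rfl fun y _ =>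
            Finset.sum_congr rfl fun b _ => by ring
      _ = 0 := by simp [h0]
  exact (mul_eq_zero.mp hga).resolve_right hC
end
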